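/- arXiv:2501.16833 — 4 statements merged into one kernel-verified Lean document; each statement's English description precedes it below -/
import Mathlib

section
/- Let L be a frame and let f : 𝔏(𝔽) → L be a map on the generators (r,—), (—,s) (r, s ∈ ℚ) of the frame of extended partial reals satisfying: (r1) f(r,—) ∧ f(—,s) = 0 whenever r ≥ s, (r3) f(r,—) = ⋁_{p>r} f(p,—), (r4) f(—,s) = ⋁_{q<s} f(—,q), and the Hausdorff conditions f(r,—)* ≤ f(—,s) and f(—,s)* ≤ f(r,—) whenever r < s. Then for all r ∈ ℚ: f(r,—) = ⋁_{p>r} f(—,p)* = ⋁_{p>r} f(p,—)**. -/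
/-- `HausdorffFn fr fs` : the family `(fr r, fs s)` indexed by rationals
satisfies relations (r1), (r3), (r4) and the Hausdorff conditions. -/
def HausdorffFn {L : Type*} [Order.Frame L] (fr fs : ℚ → L) : Prop :=
  (∀ r s : ℚ, s ≤ r → fr r ⊓ fs s = ⊥) ∧
  (∀ r : ℚ, fr r = ⨆ p > r, fr p) ∧
  (∀ s : ℚ, fs s = ⨆ q < s, fs q) ∧
  (∀ r s : ℚ, r < s → (fr r)ᶜ ≤ fs s) ∧
  (∀ r s : ℚ, r < s → (fs s)ᶜ ≤ fr r)

/-- For a Hausdorff function `f` on a frame `L`,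
`f(r,—) = ⋁_{p>r} f(—,p)* = ⋁_{p>r} f(p,—)**`. -/
theorem stmt_11 {L : Type*} [Order.Frame L] (fr fs : ℚ → L)
    (hf : HausdorffFn fr fs) :
    ∀ r : ℚ, fr r = (⨆ p > r, (fs p)ᶜ) ∧ fr r = ⨆ p > r, (fr p)ᶜᶜ := by
  obtain ⟨h1, h3, _h4, _h5, h6⟩ := hf
  intro r
  have key : fr r = ⨆ p > r, (fs p)ᶜ := by
    apply le_antisymm
    · rw [h3 r]
      refine iSup₂_le fun p hp => le_trans ?_ (le_iSup₂ p hp)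
      exact (le_compl_iff_disjoint_right).2 (disjoint_iff.2 (h1 p p le_rfl))
    · exact iSup₂_le fun p hp => h6 r p hp
  refine ⟨key, le_antisymm ?_ ?_⟩
  · rw [h3 r]
    exact iSup₂_le fun p hp => le_trans le_compl_compl (le_iSup₂ (f := fun p (_ : p > r) => (fr p)ᶜᶜ) p hp)
  · rw [key]
    refine iSup₂_le fun p hp => le_trans ?_ (le_iSup₂ p hp)
    have : fr p ≤ (fs p)ᶜ :=
      (le_compl_iff_disjoint_right).2 (disjoint_iff.2 (h1 p p le_rfl))
    calc (fr p)ᶜᶜ ≤ (fs p)ᶜᶜᶜ := compl_anti (compl_anti this)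
      _ = (fs p)ᶜ := compl_compl_compl _
end

section
/- Let L be an extremally disconnected frame (a* ∨ a** = 1 for all a). Then every Hausdorff function f on L (satisfying (r1), (r3), (r4) and the Hausdorff conditions) satisfies f(r,—) ∨ f(—,s) = 1 whenever r < s. -/
/-- If `L` is extremally disconnected, then every Hausdorff function on `L`
satisfies `f(r,—) ⊔ f(—,s) = ⊤` whenever `r < s`. -/
theorem stmt_14 {L : Type*} [Order.Frame L]
    (hED : ∀ a : L, aᶜ ⊔ aᶜᶜ = ⊤) (fr fs : ℚ → L)
    (hf : HausdorffFn fr fs) :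
    ∀ r s : ℚ, r < s → fr r ⊔ fs s = ⊤ := by
  obtain ⟨h1, _, _, h4, h5⟩ := hf
  intro r s hrs
  obtain ⟨p, hrp, hps⟩ := exists_between hrs
  have hdisj : fr p ⊓ fs p = ⊥ := h1 p p le_rfl
  have h6 : fs p ≤ (fr p)ᶜ := le_compl_iff_disjoint_left.mpr
    (disjoint_iff_inf_le.mpr hdisj.le)
  have h7 : (fr p)ᶜᶜ ≤ (fs p)ᶜ := compl_le_compl h6
  have : (⊤ : L) ≤ fr r ⊔ fs s := by
    rw [← hED (fr p)]
    exact sup_le (le_sup_of_le_right (h4 p s hps))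
      (le_sup_of_le_left (h7.trans (h5 r p hrp)))
  exact top_le_iff.mp this
end

section
/- Let L be a frame and f a Hausdorff function on L. Then the following are equivalent: (1) (⋁_{s∈ℚ} f(—,s))* = 0; (2) ⋀_{r∈ℚ} f(r,—) = 0. -/
lemma frame_compl_iSup {L : Type*} [Order.Frame L] (f : ℚ → L) :
    (⨆ s : ℚ, f s)ᶜ = ⨅ s : ℚ, (f s)ᶜ := by
  apply le_antisymm
  · exact le_iInf fun i => compl_anti (le_iSup f i)
  · rw [le_compl_iff_disjoint_right, disjoint_iSup_iff]
    intro i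
    exact disjoint_compl_left.mono_left (iInf_le _ i)

/-- For a Hausdorff function `f` on a frame `L`:
`(⋁_s f(—,s))* = 0` iff `⋀_r f(r,—) = 0`. -/
theorem stmt_16 {L : Type*} [Order.Frame L] (fr fs : ℚ → L)
    (hf : HausdorffFn fr fs) :
    (⨆ s : ℚ, fs s)ᶜ = ⊥ ↔ (⨅ r : ℚ, fr r) = ⊥ := by
  obtain ⟨h1, _, _, _, h5⟩ := hf
  have key : (⨅ r : ℚ, fr r) = ⨅ s : ℚ, (fs s)ᶜ := by
    apply le_antisymm
    · refine le_iInf fun s => (iInf_le _ s).trans ?_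
      rw [le_compl_iff_disjoint_right, disjoint_iff]
      exact h1 s s le_rfl
    · exact le_iInf fun r => (iInf_le _ (r + 1)).trans (h5 r (r + 1) (by linarith))
  rw [frame_compl_iSup, key]
end

section
/- Let α : ℚ → ℚ ∩ (-1,1) be an order isomorphism with inverse β. There is an order isomorphism between the set of extended partial real functions on a frame L (maps f on generators satisfying f(r,—) ∧ f(—,s) = 0 for r ≥ s, f(r,—) = ⋁_{p>r} f(p,—), f(—,s) = ⋁_{q<s} f(—,q)) and the set of partial real functions g on L (satisfying additionally ⋁_r g(r,—) = 1 and ⋁_s g(—,s) = 1) bounded by -1 and 1 (i.e. g(r,—) = 1 for r < -1, g(r,—) = 0 for r ≥ 1, g(—,s) = 1 for s > 1, g(—,s) = 0 for s ≤ -1), given by reparametrization: Ψ(f)(r,—) = f(β(r),—) for -1 < r < 1, Ψ(f)(-1,—) = ⋁_t f(t,—), Ψ(f)(r,—) = 0 for r ≥ 1, Ψ(f)(r,—) = 1 for r < -1, and dually on (—,s) generators; with inverse Φ(g)(r,—) = g(α(r),—), Φ(g)(—,s) = g(—,α(s)). -/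
/-- An extended partial real function on a frame `L`: a pair of families
`(fr, fs)` indexed by rationals satisfying (r1), (r3), (r4). -/
def IsEPR {L : Type*} [Order.Frame L] (f : (ℚ → L) × (ℚ → L)) : Prop :=
  (∀ r s : ℚ, s ≤ r → f.1 r ⊓ f.2 s = ⊥) ∧
  (∀ r : ℚ, f.1 r = ⨆ p > r, f.1 p) ∧
  (∀ s : ℚ, f.2 s = ⨆ q < s, f.2 q)

/-- A partial real function on `L` bounded by `-1` and `1`: additionally
(r5), (r6) hold and the boundedness conditions hold. -/
def IsBPR {L : Type*} [Order.Frame L] (g : (ℚ → L) × (ℚ → L)) : Prop :=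
  IsEPR g ∧ (⨆ r : ℚ, g.1 r) = ⊤ ∧ (⨆ s : ℚ, g.2 s) = ⊤ ∧
  (∀ r : ℚ, r < -1 → g.1 r = ⊤) ∧ (∀ r : ℚ, 1 ≤ r → g.1 r = ⊥) ∧
  (∀ s : ℚ, 1 < s → g.2 s = ⊤) ∧ (∀ s : ℚ, s ≤ -1 → g.2 s = ⊥)

/-- The pointwise order on (extended) partial real functions. -/
def prLE {L : Type*} [Order.Frame L] (f g : (ℚ → L) × (ℚ → L)) : Prop :=
  (∀ r : ℚ, f.1 r ≤ g.1 r) ∧ (∀ s : ℚ, g.2 s ≤ f.2 s)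

section Aux
variable {L : Type*} [Order.Frame L]

/-- The reparametrization map `Ψ`. -/
noncomputable def epsi (β : ℚ → ℚ) (f : (ℚ → L) × (ℚ → L)) : (ℚ → L) × (ℚ → L) :=
  (fun r => if r < -1 then ⊤ else if 1 ≤ r then ⊥ else if r = -1 then ⨆ t, f.1 t else f.1 (β r),
   fun s => if 1 < s then ⊤ else if s ≤ -1 then ⊥ else if s = 1 then ⨆ t, f.2 t else f.2 (β s))

/-- The reparametrization map `Φ`. -/
def ephi (α : ℚ → ℚ) (g : (ℚ → L) × (ℚ → L)) : (ℚ → L) × (ℚ → L) :=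
  (fun r => g.1 (α r), fun s => g.2 (α s))

lemma epsi1_top {β : ℚ → ℚ} {f : (ℚ → L) × (ℚ → L)} {r : ℚ} (h : r < -1) :
    (epsi β f).1 r = ⊤ := if_pos h

lemma epsi1_bot {β : ℚ → ℚ} {f : (ℚ → L) × (ℚ → L)} {r : ℚ} (h : 1 ≤ r) :
    (epsi β f).1 r = ⊥ := by
  unfold epsi; dsimp only; rw [if_neg (by linarith), if_pos h]

lemma epsi1_neg1 {β : ℚ → ℚ} {f : (ℚ → L) × (ℚ → L)} :
    (epsi β f).1 (-1) = ⨆ t, f.1 t := by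
  unfold epsi; dsimp only; rw [if_neg (lt_irrefl _), if_neg (by norm_num), if_pos rfl]

lemma epsi1_mid {β : ℚ → ℚ} {f : (ℚ → L) × (ℚ → L)} {r : ℚ} (h1 : -1 < r) (h2 : r < 1) :
    (epsi β f).1 r = f.1 (β r) := by
  unfold epsi; dsimp only; rw [if_neg (by linarith), if_neg (by linarith), if_neg h1.ne']

lemma epsi2_top {β : ℚ → ℚ} {f : (ℚ → L) × (ℚ → L)} {s : ℚ} (h : 1 < s) :
    (epsi β f).2 s = ⊤ := if_pos h

lemma epsi2_bot {β : ℚ → ℚ} {f : (ℚ → L) × (ℚ → L)} {s : ℚ} (h : s ≤ -1) :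
    (epsi β f).2 s = ⊥ := by
  unfold epsi; dsimp only; rw [if_neg (by linarith), if_pos h]

lemma epsi2_one {β : ℚ → ℚ} {f : (ℚ → L) × (ℚ → L)} :
    (epsi β f).2 1 = ⨆ t, f.2 t := by
  unfold epsi; dsimp only; rw [if_neg (lt_irrefl _), if_neg (by norm_num), if_pos rfl]

lemma epsi2_mid {β : ℚ → ℚ} {f : (ℚ → L) × (ℚ → L)} {s : ℚ} (h1 : -1 < s) (h2 : s < 1) :
    (epsi β f).2 s = f.2 (β s) := by
  unfold epsi; dsimp only; rw [if_neg (by linarith), if_neg (by linarith), if_neg h2.ne]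

lemma IsEPR.anti {f : (ℚ → L) × (ℚ → L)} (hf : IsEPR f) {r r' : ℚ} (h : r ≤ r') :
    f.1 r' ≤ f.1 r := by
  rcases h.eq_or_lt with rfl | h
  · exact le_rfl
  · conv_rhs => rw [hf.2.1 r]
    exact le_iSup₂ (f := fun p (_ : p > r) => f.1 p) r' h

lemma IsEPR.mono {f : (ℚ → L) × (ℚ → L)} (hf : IsEPR f) {s s' : ℚ} (h : s ≤ s') :
    f.2 s ≤ f.2 s' := by
  rcases h.eq_or_lt with rfl | h
  · exact le_rfl
  · conv_rhs => rw [hf.2.2 s']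
    exact le_iSup₂ (f := fun q (_ : q < s') => f.2 q) s h

end Aux

/-- Given an order isomorphism `α : ℚ → ℚ ∩ (-1,1)` with inverse `β`, the
reparametrization maps `Ψ` and `Φ` constitute a pair of mutually inverse,
order-preserving bijections between the extended partial real functions on a
frame `L` and the partial real functions on `L` bounded by `-1` and `1`,
given by the formulas: `Ψ(f)(r,—) = f(β r,—)` for `-1 < r < 1`,
`Ψ(f)(-1,—) = ⋁_t f(t,—)`, `Ψ(f)(r,—) = ⊥` for `r ≥ 1`, `Ψ(f)(r,—) = ⊤` for
`r < -1` (dually on the `(—,s)` generators), and `Φ(g)(r,—) = g(α r,—)`,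
`Φ(g)(—,s) = g(—,α s)`. -/
theorem stmt_18 {L : Type*} [Order.Frame L] (α β : ℚ → ℚ)
    (hmono : StrictMono α) (hrange : ∀ q : ℚ, -1 < α q ∧ α q < 1)
    (hsurj : ∀ q : ℚ, -1 < q → q < 1 → ∃ p : ℚ, α p = q)
    (hβα : ∀ q : ℚ, β (α q) = q) :
    ∃ Ψ Φ : (ℚ → L) × (ℚ → L) → (ℚ → L) × (ℚ → L),
      (∀ f, IsEPR f → IsBPR (Ψ f)) ∧
      (∀ g, IsBPR g → IsEPR (Φ g)) ∧
      (∀ f, IsEPR f → Φ (Ψ f) = f) ∧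
      (∀ g, IsBPR g → Ψ (Φ g) = g) ∧
      (∀ f g, IsEPR f → IsEPR g → (prLE f g ↔ prLE (Ψ f) (Ψ g))) ∧
      (∀ f, IsEPR f →
        (∀ r : ℚ, -1 < r → r < 1 → (Ψ f).1 r = f.1 (β r)) ∧
        ((Ψ f).1 (-1) = ⨆ t : ℚ, f.1 t) ∧
        (∀ r : ℚ, 1 ≤ r → (Ψ f).1 r = ⊥) ∧
        (∀ r : ℚ, r < -1 → (Ψ f).1 r = ⊤) ∧
        (∀ s : ℚ, -1 < s → s < 1 → (Ψ f).2 s = f.2 (β s)) ∧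
        ((Ψ f).2 1 = ⨆ t : ℚ, f.2 t) ∧
        (∀ s : ℚ, 1 < s → (Ψ f).2 s = ⊤) ∧
        (∀ s : ℚ, s ≤ -1 → (Ψ f).2 s = ⊥)) ∧
      (∀ g, IsBPR g →
        (∀ r : ℚ, (Φ g).1 r = g.1 (α r)) ∧
        (∀ s : ℚ, (Φ g).2 s = g.2 (α s))) := by
  have hαβ : ∀ q : ℚ, -1 < q → q < 1 → α (β q) = q := by
    intro q h1 h2
    obtain ⟨p, hp⟩ := hsurj q h1 h2
    rw [← hp, hβα]
  have hβlt : ∀ q q' : ℚ, -1 < q → q' < 1 → q < q' → β q < β q' := by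
    intro q q' h1 h2 h
    by_contra hc
    push_neg at hc
    have h3 := hmono.le_iff_le.mpr hc
    rw [hαβ q h1 (h.trans h2), hαβ q' (h1.trans h) h2] at h3
    exact absurd h3 (not_le.mpr h)
  have hβle : ∀ q q' : ℚ, -1 < q → q' < 1 → q ≤ q' → β q ≤ β q' := by
    intro q q' h1 h2 h
    rcases h.eq_or_lt with rfl | h
    · exact le_rfl
    · exact (hβlt q q' h1 h2 h).le
  refine ⟨epsi β, ephi α, ?_, ?_, ?_, ?_, ?_, ?_, ?_⟩
  · -- IsEPR f → IsBPR (epsi β f)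
    intro f hf
    refine ⟨⟨?_, ?_, ?_⟩, ?_, ?_, fun r h => epsi1_top h, fun r h => epsi1_bot h,
      fun s h => epsi2_top h, fun s h => epsi2_bot h⟩
    · -- r1
      intro r s hsr
      by_cases h1r : 1 ≤ r
      · rw [epsi1_bot h1r, bot_inf_eq]
      by_cases hrneg : r < -1
      · rw [epsi2_bot (le_of_lt (lt_of_le_of_lt hsr hrneg)), inf_bot_eq]
      by_cases hs : s ≤ -1
      · rw [epsi2_bot hs, inf_bot_eq]
      push_neg at h1r hrneg hs
      have hsr' : -1 < r := lt_of_lt_of_le hs hsr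
      have hs1 : s < 1 := lt_of_le_of_lt hsr h1r
      rw [epsi1_mid hsr' h1r, epsi2_mid hs hs1]
      exact hf.1 _ _ (hβle s r hs h1r hsr)
    · -- r3
      intro r
      by_cases h1 : 1 ≤ r
      · rw [epsi1_bot h1]
        refine (le_bot_iff.mp (iSup₂_le fun p hp => ?_)).symm
        rw [epsi1_bot (h1.trans hp.le)]
      by_cases hneg : r < -1
      · rw [epsi1_top hneg]
        refine (top_le_iff.mp ?_).symm
        calc (⊤ : L) = (epsi β f).1 ((r - 1) / 2) := (epsi1_top (by linarith)).symm
          _ ≤ _ := le_iSup₂ (f := fun p (_ : p > r) => (epsi β f).1 p) ((r - 1) / 2) (by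
              show r < (r - 1) / 2; linarith)
      by_cases hr1 : r = -1
      · subst hr1
        rw [epsi1_neg1]
        apply le_antisymm
        · refine iSup_le fun t => ?_
          have h := hrange t
          calc f.1 t = f.1 (β (α t)) := by rw [hβα]
            _ = (epsi β f).1 (α t) := (epsi1_mid h.1 h.2).symm
            _ ≤ _ := le_iSup₂ (f := fun p (_ : p > (-1 : ℚ)) => (epsi β f).1 p) (α t) h.1
        · refine iSup₂_le fun p hp => ?_
          by_cases hp1 : 1 ≤ p
          · rw [epsi1_bot hp1]; exact bot_le
          · push_neg at hp1
            rw [epsi1_mid hp hp1]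
            exact le_iSup _ (β p)
      push_neg at h1 hneg
      have hrm : -1 < r := lt_of_le_of_ne hneg (Ne.symm hr1)
      rw [epsi1_mid hrm h1]
      apply le_antisymm
      · conv_lhs => rw [hf.2.1 (β r)]
        refine iSup₂_le fun q hq => ?_
        have hq' := hrange q
        have hpr : r < α q := by
          rw [← hαβ r hrm h1]; exact hmono hq
        calc f.1 q = (epsi β f).1 (α q) := by rw [epsi1_mid hq'.1 hq'.2, hβα]
          _ ≤ _ := le_iSup₂ (f := fun p (_ : p > r) => (epsi β f).1 p) (α q) hpr
      · refine iSup₂_le fun p hp => ?_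
        by_cases hp1 : 1 ≤ p
        · rw [epsi1_bot hp1]; exact bot_le
        · push_neg at hp1
          rw [epsi1_mid (hrm.trans hp) hp1]
          exact hf.anti (hβle r p hrm hp1 hp.le)
    · -- r4
      intro s
      by_cases hs1 : s ≤ -1
      · rw [epsi2_bot hs1]
        refine (le_bot_iff.mp (iSup₂_le fun q hq => ?_)).symm
        rw [epsi2_bot (hq.le.trans hs1)]
      by_cases hstop : 1 < s
      · rw [epsi2_top hstop]
        refine (top_le_iff.mp ?_).symm
        calc (⊤ : L) = (epsi β f).2 ((s + 1) / 2) := (epsi2_top (by linarith)).symm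
          _ ≤ _ := le_iSup₂ (f := fun q (_ : q < s) => (epsi β f).2 q) ((s + 1) / 2) (by
              show (s + 1) / 2 < s; linarith)
      by_cases hseq : s = 1
      · subst hseq
        rw [epsi2_one]
        apply le_antisymm
        · refine iSup_le fun t => ?_
          have h := hrange t
          calc f.2 t = f.2 (β (α t)) := by rw [hβα]
            _ = (epsi β f).2 (α t) := (epsi2_mid h.1 h.2).symm
            _ ≤ _ := le_iSup₂ (f := fun q (_ : q < (1 : ℚ)) => (epsi β f).2 q) (α t) h.2
        · refine iSup₂_le fun q hq => ?_
          by_cases hq1 : q ≤ -1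
          · rw [epsi2_bot hq1]; exact bot_le
          · push_neg at hq1
            rw [epsi2_mid hq1 hq]
            exact le_iSup _ (β q)
      push_neg at hs1 hstop
      have hsm : s < 1 := lt_of_le_of_ne hstop hseq
      rw [epsi2_mid hs1 hsm]
      apply le_antisymm
      · conv_lhs => rw [hf.2.2 (β s)]
        refine iSup₂_le fun q hq => ?_
        have hq' := hrange q
        have hqs : α q < s := by
          rw [← hαβ s hs1 hsm]; exact hmono hq
        calc f.2 q = (epsi β f).2 (α q) := by rw [epsi2_mid hq'.1 hq'.2, hβα]
          _ ≤ _ := le_iSup₂ (f := fun q' (_ : q' < s) => (epsi β f).2 q') (α q) hqs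
      · refine iSup₂_le fun q hq => ?_
        by_cases hq1 : q ≤ -1
        · rw [epsi2_bot hq1]; exact bot_le
        · push_neg at hq1
          rw [epsi2_mid hq1 (hq.trans hsm)]
          exact hf.mono (hβle q s hq1 hsm hq.le)
    · -- r5
      rw [eq_top_iff]
      calc (⊤ : L) = (epsi β f).1 (-2) := (epsi1_top (by norm_num)).symm
        _ ≤ _ := le_iSup _ (-2)
    · -- r6
      rw [eq_top_iff]
      calc (⊤ : L) = (epsi β f).2 2 := (epsi2_top (by norm_num)).symm
        _ ≤ _ := le_iSup _ 2
  · -- IsBPR g → IsEPR (ephi α g)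
    intro g hg
    obtain ⟨hge, _, _, _, hgb1, _, hgb2⟩ := hg
    refine ⟨fun r s h => hge.1 _ _ (hmono.monotone h), ?_, ?_⟩
    · intro r
      simp only [ephi]
      apply le_antisymm
      · conv_lhs => rw [hge.2.1 (α r)]
        refine iSup₂_le fun q hq => ?_
        by_cases hq1 : q < 1
        · obtain ⟨p, rfl⟩ := hsurj q ((hrange r).1.trans hq) hq1
          exact le_iSup₂ (f := fun p (_ : p > r) => g.1 (α p)) p (hmono.lt_iff_lt.mp hq)
        · push_neg at hq1
          rw [hgb1 q hq1]; exact bot_le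
      · exact iSup₂_le fun p hp => hge.anti (hmono hp).le
    · intro s
      simp only [ephi]
      apply le_antisymm
      · conv_lhs => rw [hge.2.2 (α s)]
        refine iSup₂_le fun q hq => ?_
        by_cases hq1 : -1 < q
        · obtain ⟨p, rfl⟩ := hsurj q hq1 (hq.trans (hrange s).2)
          exact le_iSup₂ (f := fun p (_ : p < s) => g.2 (α p)) p (hmono.lt_iff_lt.mp hq)
        · push_neg at hq1
          rw [hgb2 q hq1]; exact bot_le
      · exact iSup₂_le fun q hq => hge.mono (hmono hq).le
  · -- Φ ∘ Ψ = id
    intro f hf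
    refine Prod.ext (funext fun r => ?_) (funext fun s => ?_)
    · show (epsi β f).1 (α r) = f.1 r
      rw [epsi1_mid (hrange r).1 (hrange r).2, hβα]
    · show (epsi β f).2 (α s) = f.2 s
      rw [epsi2_mid (hrange s).1 (hrange s).2, hβα]
  · -- Ψ ∘ Φ = id
    intro g hg
    obtain ⟨hge, _, _, hgt1, hgb1, hgt2, hgb2⟩ := hg
    refine Prod.ext (funext fun r => ?_) (funext fun s => ?_)
    · by_cases h1 : r < -1
      · rw [epsi1_top h1]
        exact (hgt1 r h1).symm
      by_cases h2 : 1 ≤ r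
      · rw [epsi1_bot h2]
        exact (hgb1 r h2).symm
      by_cases h3 : r = -1
      · subst h3
        rw [epsi1_neg1]
        show (⨆ t, g.1 (α t)) = g.1 (-1)
        apply le_antisymm
        · exact iSup_le fun t => hge.anti (hrange t).1.le
        · conv_lhs => rw [hge.2.1 (-1)]
          refine iSup₂_le fun p hp => ?_
          by_cases hp1 : p < 1
          · obtain ⟨t, rfl⟩ := hsurj p hp hp1
            exact le_iSup (fun t => g.1 (α t)) t
          · push_neg at hp1
            rw [hgb1 p hp1]; exact bot_le
      push_neg at h1 h2
      have hrm : -1 < r := lt_of_le_of_ne h1 (Ne.symm h3)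
      rw [epsi1_mid hrm h2]
      show g.1 (α (β r)) = g.1 r
      rw [hαβ r hrm h2]
    · by_cases h1 : 1 < s
      · rw [epsi2_top h1]
        exact (hgt2 s h1).symm
      by_cases h2 : s ≤ -1
      · rw [epsi2_bot h2]
        exact (hgb2 s h2).symm
      by_cases h3 : s = 1
      · subst h3
        rw [epsi2_one]
        show (⨆ t, g.2 (α t)) = g.2 1
        apply le_antisymm
        · exact iSup_le fun t => hge.mono (hrange t).2.le
        · conv_lhs => rw [hge.2.2 1]
          refine iSup₂_le fun q hq => ?_
          by_cases hq1 : -1 < q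
          · obtain ⟨t, rfl⟩ := hsurj q hq1 hq
            exact le_iSup (fun t => g.2 (α t)) t
          · push_neg at hq1
            rw [hgb2 q hq1]; exact bot_le
      push_neg at h1 h2
      have hsm : s < 1 := lt_of_le_of_ne h1 h3
      rw [epsi2_mid h2 hsm]
      show g.2 (α (β s)) = g.2 s
      rw [hαβ s h2 hsm]
  · -- order iso
    intro f g hf hg
    constructor
    · rintro ⟨h1, h2⟩
      constructor
      · intro r
        by_cases hr1 : 1 ≤ r
        · rw [epsi1_bot (f := f) hr1]; exact bot_le
        by_cases hr2 : r < -1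
        · rw [epsi1_top (f := g) hr2]; exact le_top
        by_cases hr3 : r = -1
        · subst hr3
          rw [epsi1_neg1, epsi1_neg1]
          exact iSup_mono fun t => h1 t
        push_neg at hr1 hr2
        have hrm : -1 < r := lt_of_le_of_ne hr2 (Ne.symm hr3)
        rw [epsi1_mid hrm hr1, epsi1_mid hrm hr1]
        exact h1 _
      · intro s
        by_cases hs1 : 1 < s
        · rw [epsi2_top (f := f) hs1]; exact le_top
        by_cases hs2 : s ≤ -1
        · rw [epsi2_bot (f := g) hs2]; exact bot_le
        by_cases hs3 : s = 1
        · subst hs3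
          rw [epsi2_one, epsi2_one]
          exact iSup_mono fun t => h2 t
        push_neg at hs1 hs2
        have hsm : s < 1 := lt_of_le_of_ne hs1 hs3
        rw [epsi2_mid hs2 hsm, epsi2_mid hs2 hsm]
        exact h2 _
    · rintro ⟨h1, h2⟩
      constructor
      · intro r
        have h := h1 (α r)
        rwa [epsi1_mid (hrange r).1 (hrange r).2, epsi1_mid (hrange r).1 (hrange r).2,
          hβα r] at h
      · intro s
        have h := h2 (α s)
        rwa [epsi2_mid (hrange s).1 (hrange s).2, epsi2_mid (hrange s).1 (hrange s).2,
          hβα s] at h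
  · -- Ψ formulas
    intro f _
    exact ⟨fun r h1 h2 => epsi1_mid h1 h2, epsi1_neg1, fun r h => epsi1_bot h,
      fun r h => epsi1_top h, fun s h1 h2 => epsi2_mid h1 h2, epsi2_one,
      fun s h => epsi2_top h, fun s h => epsi2_bot h⟩
  · -- Φ formulas
    intro g _
    exact ⟨fun r => rfl, fun s => rfl⟩
end
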